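/- Let τ ∈ (0,1), C > τ and μ > 0, let a : [0,∞) → [0,∞) be continuous, and define d₁(t) := μ·(t + C)/(1 − τ), β(t) := ((t + C + 1 − τ)/(t + C))·(d₁(t) − 1/(t + C)) for t ≥ 0, and h(x) := x/(1 + x) for x ≥ 0. Then the pair x₁(t) = x₂(t) = 1/(t + C), defined for t ≥ −τ, satisfies the planar delay system x₁'(t) = −(a(t) + d₁(t))·x₁(t) + a(t)·x₂(t) + β(t)·h(x₁(t − τ)), x₂'(t) = −(a(t) + d₁(t))·x₂(t) + a(t)·x₁(t) + β(t)·h(x₂(t − τ)) for all t > 0. In particular this system, whose positive solution (x₁,x₂) tends to (0,0), is not permanent, even though d₁(t) ≥ μC/(1 − τ) for all t ≥ 0 and β(t) − d₁(t) = μ/(1 − τ)·(1 − τ) − (t + C + 1 − τ)/(t + C)² ≥ μ/2 for all sufficiently large t, so that (H2) and (H5) hold; here β(t) is unbounded. -/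

import Mathlib

/-!
The coefficient `β` is reverse-engineered from the solution: with `u = t + C`, the coupling
terms `∓ a(t) x` cancel on the diagonal `x₁ = x₂`, and `h(1/(u - τ)) = 1/(u - τ + 1)`, so
`β(t) h(x(t - τ)) = (d₁(t) - 1/u)/u` and the right-hand side collapses to `-1/u² = x'(t)`.
Since `β - d₁ = μ - (u + 1 - τ)/u² → μ` and `d₁ → ∞`, also `β → ∞`.
-/

open Filter Topology

lemma hasDerivAt_one_div_add_const {C t : ℝ} (ht : t + C ≠ 0) :
    HasDerivAt (fun s => 1 / (s + C)) (-1 / (t + C) ^ 2) t := by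
  simpa [one_div, neg_div, Pi.inv_def] using ((hasDerivAt_id t).add_const C).inv ht

lemma tendsto_one_div_add_const_atTop (C : ℝ) :
    Tendsto (fun t : ℝ => 1 / (t + C)) atTop (𝓝 0) := by
  simp only [one_div]
  exact (tendsto_atTop_add_const_right _ C tendsto_id).inv_tendsto_atTop

lemma tendsto_add_const_div_sq_atTop (C b : ℝ) :
    Tendsto (fun t : ℝ => (t + C + b) / (t + C) ^ 2) atTop (𝓝 0) := by
  have hv := tendsto_one_div_add_const_atTop C
  have hlim := hv.add ((hv.pow 2).const_mul b)
  rw [zero_pow two_ne_zero, mul_zero, add_zero] at hlim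
  refine hlim.congr' ?_
  filter_upwards [eventually_gt_atTop (-C)] with t ht
  have : t + C ≠ 0 := by linarith
  field_simp

lemma one_div_div_one_add_one_div {u : ℝ} (hu : u ≠ 0) : 1 / u / (1 + 1 / u) = 1 / (u + 1) := by
  rcases eq_or_ne (u + 1) 0 with h | h
  · rw [h, eq_neg_of_add_eq_zero_left h]; norm_num
  · field_simp

lemma diagonal_rhs_eq_neg_one_div_sq {a d τ t C : ℝ} (h₀ : t + C ≠ 0)
    (hτ : t - τ + C + 1 ≠ 0) :
    -(a + d) * (1 / (t + C)) + a * (1 / (t + C))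
      + (t + C + 1 - τ) / (t + C) * (d - 1 / (t + C)) * (1 / (t - τ + C + 1))
      = -1 / (t + C) ^ 2 := by
  field_simp
  ring

theorem not_permanent_counterexample_general
    (τ C μ : ℝ) (hτ0 : 0 < τ) (hτ1 : τ < 1) (hC : τ < C) (hμ : 0 < μ)
    (a : ℝ → ℝ)
    (d₁ β h : ℝ → ℝ)
    (hd₁_def : ∀ t, d₁ t = μ * (t + C) / (1 - τ))
    (hβ_def : ∀ t, β t = (t + C + 1 - τ) / (t + C) * (d₁ t - 1 / (t + C)))
    (hh_def : ∀ x ≥ (0 : ℝ), h x = x / (1 + x)) :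
    -- x₁(t) = x₂(t) = 1/(t+C) solves both equations of the planar system for t > 0
    (∀ t > (0 : ℝ), HasDerivAt (fun s => 1 / (s + C))
      (-(a t + d₁ t) * (1 / (t + C)) + a t * (1 / (t + C))
        + β t * h (1 / (t - τ + C))) t)
    -- this positive solution tends to 0
    ∧ (∀ t ≥ -τ, 0 < 1 / (t + C))
    ∧ Filter.Tendsto (fun t : ℝ => 1 / (t + C)) Filter.atTop (nhds 0)
    -- (H2)-type bound: d₁(t) ≥ μ C/(1-τ)
    ∧ (∀ t ≥ (0 : ℝ), μ * C / (1 - τ) ≤ d₁ t)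
    -- (H5)-type bound: β(t) - d₁(t) = μ - (t+C+1-τ)/(t+C)² ≥ μ/2 for large t
    ∧ (∀ t ≥ (0 : ℝ), β t - d₁ t = μ - (t + C + 1 - τ) / (t + C) ^ 2)
    ∧ (∃ T, ∀ t ≥ T, μ / 2 ≤ β t - d₁ t)
    -- β is unbounded
    ∧ (∀ K, ∃ t ≥ (0 : ℝ), K ≤ β t) := by
  have hC0 : 0 < C := hτ0.trans hC
  have hτ' : 0 < 1 - τ := sub_pos.mpr hτ1
  have hgap : ∀ t ≥ (0 : ℝ), β t - d₁ t = μ - (t + C + 1 - τ) / (t + C) ^ 2 := by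
    intro t ht
    have : t + C ≠ 0 := by positivity
    rw [hβ_def, hd₁_def]
    field_simp
    ring
  have hgap_large : ∀ᶠ t in atTop, μ / 2 ≤ β t - d₁ t := by
    filter_upwards [eventually_ge_atTop 0,
      ((tendsto_add_const_div_sq_atTop C (1 - τ)).eventually (ge_mem_nhds (half_pos hμ)))]
      with t ht hsmall
    rw [← add_sub_assoc] at hsmall
    rw [hgap t ht]
    linarith
  have hd₁_tendsto : Tendsto d₁ atTop atTop := by
    rw [funext hd₁_def]
    exact ((tendsto_atTop_add_const_right _ C tendsto_id).const_mul_atTop hμ).atTop_div_const hτ'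
  have hβ_tendsto : Tendsto β atTop atTop :=
    tendsto_atTop_mono' _ (hgap_large.mono fun t ht => by linarith) hd₁_tendsto
  refine ⟨fun t ht => ?_, fun t ht => ?_, tendsto_one_div_add_const_atTop C, fun t ht => ?_, hgap,
    eventually_atTop.mp hgap_large, fun K => ?_⟩
  · have hu : 0 < t - τ + C := by linarith
    rw [hh_def _ (by positivity), one_div_div_one_add_one_div hu.ne', hβ_def,
      diagonal_rhs_eq_neg_one_div_sq (by linarith) (by linarith)]
    exact hasDerivAt_one_div_add_const (by linarith)
  · exact one_div_pos.mpr (by linarith)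
  · rw [hd₁_def]
    gcongr
    linarith
  · obtain ⟨t, hβK, ht⟩ := ((hβ_tendsto.eventually_ge_atTop K).and (eventually_ge_atTop 0)).exists
    exact ⟨t, ht, hβK⟩

/-- Counter-example (Example 3.5): the planar delay system
`x₁' = -(a(t)+d₁(t)) x₁ + a(t) x₂ + β(t) h(x₁(t-τ))`,
`x₂' = -(a(t)+d₁(t)) x₂ + a(t) x₁ + β(t) h(x₂(t-τ))`, with `h(x) = x/(1+x)`, admits the
positive solution `x₁ = x₂ = 1/(t+C)` tending to `(0,0)`, so it is not permanent, even
though `d₁(t) ≥ μC/(1-τ)` and `β(t) - d₁(t) ≥ μ/2` for large `t` ((H2) and (H5) hold);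
here `β` is unbounded. -/
theorem not_permanent_counterexample
    (τ C μ : ℝ) (hτ0 : 0 < τ) (hτ1 : τ < 1) (hC : τ < C) (hμ : 0 < μ)
    (a : ℝ → ℝ) (ha_cont : ContinuousOn a (Set.Ici 0))
    (ha_nonneg : ∀ t ≥ (0 : ℝ), 0 ≤ a t)
    (d₁ β h : ℝ → ℝ)
    (hd₁_def : ∀ t, d₁ t = μ * (t + C) / (1 - τ))
    (hβ_def : ∀ t, β t = (t + C + 1 - τ) / (t + C) * (d₁ t - 1 / (t + C)))
    (hh_def : ∀ x ≥ (0 : ℝ), h x = x / (1 + x)) :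
    -- x₁(t) = x₂(t) = 1/(t+C) solves both equations of the planar system for t > 0
    (∀ t > (0 : ℝ), HasDerivAt (fun s => 1 / (s + C))
      (-(a t + d₁ t) * (1 / (t + C)) + a t * (1 / (t + C))
        + β t * h (1 / (t - τ + C))) t)
    -- this positive solution tends to 0
    ∧ (∀ t ≥ -τ, 0 < 1 / (t + C))
    ∧ Filter.Tendsto (fun t : ℝ => 1 / (t + C)) Filter.atTop (nhds 0)
    -- (H2)-type bound: d₁(t) ≥ μ C/(1-τ)
    ∧ (∀ t ≥ (0 : ℝ), μ * C / (1 - τ) ≤ d₁ t)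
    -- (H5)-type bound: β(t) - d₁(t) = μ - (t+C+1-τ)/(t+C)² ≥ μ/2 for large t
    ∧ (∀ t ≥ (0 : ℝ), β t - d₁ t = μ - (t + C + 1 - τ) / (t + C) ^ 2)
    ∧ (∃ T, ∀ t ≥ T, μ / 2 ≤ β t - d₁ t)
    -- β is unbounded
    ∧ (∀ K, ∃ t ≥ (0 : ℝ), K ≤ β t) :=
  not_permanent_counterexample_general τ C μ hτ0 hτ1 hC hμ a d₁ β h hd₁_def hβ_def hh_def
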